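/- The family {ξ⁰} ∪ {ξ⁺_q : 1 ≤ q ≤ m} ∪ {ξ⁻_q : 1 ≤ q ≤ m} of functions V_m → R is R-linearly independent: if h₀ ∈ R and h_{q,1}, h_{q,2} ∈ R (1 ≤ q ≤ m) satisfy h₀·ξ⁰(t) + Σ_{q=1}^{m} ( h_{q,1}·ξ⁺_q(t) + h_{q,2}·ξ⁻_q(t) ) = 0 for all t ∈ V_m, then h₀ = 0 and h_{q,1} = h_{q,2} = 0 for all 1 ≤ q ≤ m. -/

import Mathlib

noncomputable section

open Finset MvPolynomial

/-- The coefficient ring `R = ℚ[α,δ]`, realized as polynomials in two variables. -/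
abbrev Rpoly : Type := MvPolynomial (Fin 2) ℚ

/-- The variable `α`. -/
def va : Rpoly := X 0

/-- The variable `δ`. -/
def vd : Rpoly := X 1

/-- `P⁻(a,b) = ∏_{k=a}^{b} (−α + k·δ)`. -/
def Pneg (a b : ℤ) : Rpoly :=
  ∏ k ∈ Finset.Icc a b, (-va + MvPolynomial.C (k : ℚ) * vd)

/-- `P⁺(a,b) = ∏_{k=a}^{b} (α + k·δ)`. -/
def Ppos (a b : ℤ) : Rpoly :=
  ∏ k ∈ Finset.Icc a b, (va + MvPolynomial.C (k : ℚ) * vd)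

/-- Binomial coefficient `C(n,q)` (all uses have `n ≥ 0`). -/
def B (n : ℤ) (q : ℕ) : ℚ := (n.toNat).choose q

/-- The Knutson–Tao class `ξ⁺_q = ξ(m+q, m−q)`, as a function on vertices `t`
(the vertex `t` encodes the pair `(m+t, m−t)`). -/
def xiP (m : ℤ) (q : ℕ) (t : ℤ) : Rpoly :=
  if (q : ℤ) ≤ t ∧ t ≤ m then
    MvPolynomial.C (B (⌈((t : ℚ) - (q : ℚ) + 1) / 2⌉ + q - 1) q) *
      Pneg (⌈((t : ℚ) - (q : ℚ) + 1) / 2⌉ - 1) (⌈((t : ℚ) - (q : ℚ) + 1) / 2⌉ + q - 2)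
  else if -m ≤ t ∧ t ≤ -((q : ℤ) + 1) then
    MvPolynomial.C (B (⌈(-(t : ℚ) - (q : ℚ)) / 2⌉ + q - 1) q) *
      Ppos (⌈(-(t : ℚ) - (q : ℚ)) / 2⌉ + 1) (⌈(-(t : ℚ) - (q : ℚ)) / 2⌉ + q)
  else 0

/-- The Knutson–Tao class `ξ⁻_q = ξ(m−q, m+q)`. -/
def xiM (m : ℤ) (q : ℕ) (t : ℤ) : Rpoly :=
  if (q : ℤ) + 1 ≤ t ∧ t ≤ m then
    MvPolynomial.C (B (⌈((t : ℚ) - (q : ℚ)) / 2⌉ + q - 1) q) *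
      Pneg (⌈((t : ℚ) - (q : ℚ)) / 2⌉) (⌈((t : ℚ) - (q : ℚ)) / 2⌉ + q - 1)
  else if -m ≤ t ∧ t ≤ -(q : ℤ) then
    MvPolynomial.C (B (⌈(-(t : ℚ) - (q : ℚ) + 1) / 2⌉ + q - 1) q) *
      Ppos (⌈(-(t : ℚ) - (q : ℚ) + 1) / 2⌉) (⌈(-(t : ℚ) - (q : ℚ) + 1) / 2⌉ + q - 1)
  else 0

/-- The weight of the vertex `t`: `w(t) = ((1−2t)/2)·α + (t(t−1)/2)·δ`. -/
def w (t : ℤ) : Rpoly :=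
  MvPolynomial.C ((1 - 2 * (t : ℚ)) / 2) * va +
    MvPolynomial.C (((t : ℚ) * ((t : ℚ) - 1)) / 2) * vd

/-!
The classes are triangular with respect to the vertices `0, ±1, …, ±m`: `ξ⁺_q` and `ξ⁻_q`
vanish at every vertex `t` with `|t| < q`, `ξ⁻_q` also vanishes at `t = q`, `ξ⁺_q` also at
`t = -q`, while `ξ⁺_q(q)` and `ξ⁻_q(-q)` are nonzero products of linear forms. Evaluating the
relation at `t = 0` kills `h₀`, and then evaluating at `t = ±q` for `q = 1, 2, …, m` in turn
kills `h_{q,1}` and `h_{q,2}`.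
-/

lemma Pneg_ne_zero (a b : ℤ) : Pneg a b ≠ 0 :=
  prod_ne_zero_iff.mpr fun k _ h => by
    simpa [va, vd] using congrArg (eval ![1, 0]) h

lemma Ppos_ne_zero (a b : ℤ) : Ppos a b ≠ 0 :=
  prod_ne_zero_iff.mpr fun k _ h => by
    simpa [va, vd] using congrArg (eval ![1, 0]) h

lemma ceil_self_sub_self_add_one_div_two (q : ℚ) : ⌈(q - q + 1) / 2⌉ = 1 := by
  rw [Int.ceil_eq_iff]
  norm_num

lemma B_one_add_sub_one_self (q : ℕ) : B (1 + q - 1) q = 1 := by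
  simp [B]

section Support

variable (m : ℤ) (q : ℕ)

lemma xiP_eq_zero {t : ℤ} (ht : t < q) (ht' : -((q : ℤ) + 1) < t) : xiP m q t = 0 := by
  rw [xiP, if_neg (by omega), if_neg (by omega)]

lemma xiM_eq_zero {t : ℤ} (ht : t < q + 1) (ht' : -(q : ℤ) < t) : xiM m q t = 0 := by
  rw [xiM, if_neg (by omega), if_neg (by omega)]

lemma xiP_self_ne_zero (hqm : (q : ℤ) ≤ m) : xiP m q q ≠ 0 := by
  rw [xiP, if_pos ⟨le_rfl, hqm⟩, Int.cast_natCast, ceil_self_sub_self_add_one_div_two,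
    B_one_add_sub_one_self, map_one, one_mul]
  exact Pneg_ne_zero _ _

lemma xiM_neg_self_ne_zero (hq : 1 ≤ q) (hqm : (q : ℤ) ≤ m) : xiM m q (-q) ≠ 0 := by
  rw [xiM, if_neg (by omega), if_pos ⟨by omega, le_rfl⟩, Int.cast_neg, neg_neg,
    Int.cast_natCast, ceil_self_sub_self_add_one_div_two, B_one_add_sub_one_self, map_one,
    one_mul]
  exact Ppos_ne_zero _ _

end Support

section Triangular

variable {m : ℕ} {h1 h2 : ℕ → Rpoly}

lemma sum_xi_at_zero :
    ∑ q ∈ Icc 1 m, (h1 q * xiP m q 0 + h2 q * xiM m q 0) = 0 :=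
  sum_eq_zero fun q hq => by
    have hq1 := (mem_Icc.mp hq).1
    rw [xiP_eq_zero _ _ (by omega) (by omega), xiM_eq_zero _ _ (by omega) (by omega)]
    ring

variable {p : ℕ}

lemma sum_xi_at_pos (hp : p ∈ Icc 1 m) (hlow : ∀ q ∈ Icc 1 m, q < p → h1 q = 0 ∧ h2 q = 0) :
    ∑ q ∈ Icc 1 m, (h1 q * xiP m q p + h2 q * xiM m q p) = h1 p * xiP m p p := by
  have hp1 := (mem_Icc.mp hp).1
  rw [sum_eq_single_of_mem p hp, xiM_eq_zero _ _ (by omega) (by omega), mul_zero, add_zero]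
  intro q hq hqp
  rcases lt_or_gt_of_ne hqp with hlt | hgt
  · rw [(hlow q hq hlt).1, (hlow q hq hlt).2, zero_mul, zero_mul, add_zero]
  · rw [xiP_eq_zero _ _ (by omega) (by omega), xiM_eq_zero _ _ (by omega) (by omega)]
    ring

lemma sum_xi_at_neg (hp : p ∈ Icc 1 m) (hlow : ∀ q ∈ Icc 1 m, q < p → h1 q = 0 ∧ h2 q = 0) :
    ∑ q ∈ Icc 1 m, (h1 q * xiP m q (-p) + h2 q * xiM m q (-p)) = h2 p * xiM m p (-p) := by
  have hp1 := (mem_Icc.mp hp).1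
  rw [sum_eq_single_of_mem p hp, xiP_eq_zero _ _ (by omega) (by omega), mul_zero, zero_add]
  intro q hq hqp
  rcases lt_or_gt_of_ne hqp with hlt | hgt
  · rw [(hlow q hq hlt).1, (hlow q hq hlt).2, zero_mul, zero_mul, add_zero]
  · rw [xiP_eq_zero _ _ (by omega) (by omega), xiM_eq_zero _ _ (by omega) (by omega)]
    ring

end Triangular

theorem statement18_general (m : ℕ) (h0 : Rpoly) (h1 h2 : ℕ → Rpoly)
    (hz : ∀ t : ℤ, -(m : ℤ) ≤ t → t ≤ (m : ℤ) →
      h0 + ∑ q ∈ Finset.Icc 1 m, (h1 q * xiP m q t + h2 q * xiM m q t) = 0) :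
    h0 = 0 ∧ ∀ q : ℕ, 1 ≤ q → q ≤ m → h1 q = 0 ∧ h2 q = 0 := by
  have hh0 : h0 = 0 := by simpa [sum_xi_at_zero] using hz 0 (by omega) (by omega)
  refine ⟨hh0, fun p => ?_⟩
  induction p using Nat.strong_induction_on with
  | _ p IH =>
    intro hp1 hpm
    have hp : p ∈ Icc 1 m := mem_Icc.mpr ⟨hp1, hpm⟩
    have hlow : ∀ q ∈ Icc 1 m, q < p → h1 q = 0 ∧ h2 q = 0 := fun q hq hqp =>
      IH q hqp (mem_Icc.mp hq).1 (mem_Icc.mp hq).2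
    have hP := hz p (by omega) (by omega)
    have hM := hz (-p) (by omega) (by omega)
    rw [hh0, zero_add, sum_xi_at_pos hp hlow] at hP
    rw [hh0, zero_add, sum_xi_at_neg hp hlow] at hM
    exact ⟨(mul_eq_zero.mp hP).resolve_right (xiP_self_ne_zero m p (by omega)),
      (mul_eq_zero.mp hM).resolve_right (xiM_neg_self_ne_zero m p hp1 (by omega))⟩

/-- the Knutson–Tao classes `ξ⁰, ξ⁺_q, ξ⁻_q (1 ≤ q ≤ m)` are
`R`-linearly independent as functions on `V_m`. -/
theorem statement18 (m : ℕ) (hm : 1 ≤ m) (h0 : Rpoly) (h1 h2 : ℕ → Rpoly)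
    (hz : ∀ t : ℤ, -(m : ℤ) ≤ t → t ≤ (m : ℤ) →
      h0 + ∑ q ∈ Finset.Icc 1 m, (h1 q * xiP m q t + h2 q * xiM m q t) = 0) :
    h0 = 0 ∧ ∀ q : ℕ, 1 ≤ q → q ≤ m → h1 q = 0 ∧ h2 q = 0 :=
  statement18_general m h0 h1 h2 hz
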